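/- Let A be the operator on ℝⁿ (n ≥ 3) given by A(x₁,...,xₙ) = (-x₁, x₂, ..., xₙ) and, for 1 ≤ j ≤ n-1, let Q_j(x₁,...,xₙ) = (0, x₃, x₄, ..., x_{j+1}, 0, ..., 0). Then A is an isometry, Q_j is j-nilpotent, A commutes with Q_j, and A + Q_j is a (2j-1)-isometry. -/

import Mathlib

/-!
Since `A` and `Q` commute and `Q ^ j = 0`, `(A + Q) ^ k x = ∑_{r < j} (k choose r) A^(k-r) Q^r x`.
As `A` preserves inner products, `⟪A^(k-r) Q^r x, A^(k-s) Q^s x⟫` is the same for all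
`k ≥ r, s`, so `‖(A + Q) ^ k x‖²` is a polynomial in `k` of degree at most `2j - 2`. The sum
defining a `(2j-1)`-isometry is the `(2j-1)`-st forward difference of this polynomial at `0`,
hence vanishes.
-/

open scoped BigOperators

/-- `T` is an `m`-isometry on a real Hilbert space. -/
def IsMIsometryR {H : Type*} [NormedAddCommGroup H] [InnerProductSpace ℝ H]
    (m : ℕ) (T : H →L[ℝ] H) : Prop :=
  ∀ x : H, ∑ k ∈ Finset.range (m + 1),
    (-1 : ℝ) ^ (m - k) * (m.choose k) * ‖(T ^ k) x‖ ^ 2 = 0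

open Finset Polynomial
open scoped RealInnerProductSpace

theorem Commute.add_pow_eq_sum_range_of_pow_eq_zero {R : Type*} [Semiring R] {a q : R}
    (h : Commute a q) {j : ℕ} (hq : q ^ j = 0) (k : ℕ) :
    (a + q) ^ k = ∑ r ∈ range j, (k.choose r : R) * (a ^ (k - r) * q ^ r) := by
  rw [add_comm, h.symm.add_pow]
  rw [← sum_subset (range_subset_range.2 (min_le_left (k + 1) j)),
    ← sum_subset (range_subset_range.2 (min_le_right (k + 1) j))]
  · refine sum_congr rfl fun r _ => ?_
    rw [(Nat.cast_commute _ _).eq, (h.pow_pow _ _).eq]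
  · intro r hrj hr
    simp only [mem_range, lt_min_iff, not_and_or, not_lt] at hrj hr
    rw [Nat.choose_eq_zero_of_lt (by omega), Nat.cast_zero, zero_mul]
  · intro r hrk hr
    simp only [mem_range, lt_min_iff, not_and_or, not_lt] at hrk hr
    rw [pow_eq_zero_of_le (by omega) hq, zero_mul, zero_mul]

noncomputable def choosePoly (r : ℕ) : ℝ[X] :=
  C (r.factorial : ℝ)⁻¹ * descPochhammer ℝ r

theorem choosePoly_eval_natCast (r k : ℕ) : (choosePoly r).eval (k : ℝ) = k.choose r := by
  rw [choosePoly, eval_mul, eval_C, Nat.cast_choose_eq_descPochhammer_div, inv_mul_eq_div]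

theorem natDegree_choosePoly_le (r : ℕ) : (choosePoly r).natDegree ≤ r :=
  (natDegree_C_mul_le _ _).trans (descPochhammer_natDegree ℝ r).le

section MIsometry

variable {H : Type*} [NormedAddCommGroup H] [InnerProductSpace ℝ H]

theorem isMIsometryR_of_norm_sq_eq_eval {m : ℕ} {T : H →L[ℝ] H}
    (hT : ∀ x, ∃ p : ℝ[X], p.natDegree < m ∧
      ∀ k : ℕ, ‖(T ^ k) x‖ ^ 2 = p.eval (k : ℝ)) :
    IsMIsometryR m T := by
  intro x
  obtain ⟨p, hpm, hp⟩ := hT x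
  have h := fwdDiff_iter_eq_sum_shift (1 : ℝ) p.eval m 0
  rw [fwdDiff_iter_eq_zero_of_degree_lt hpm] at h
  refine (sum_congr rfl fun k _ => ?_).trans h.symm
  rw [hp, zero_add, nsmul_one, zsmul_eq_mul]
  push_cast
  rfl

theorem norm_pow_apply_of_norm_map {A : H →L[ℝ] H} (hA : ∀ x, ‖A x‖ = ‖x‖) (t : ℕ)
    (x : H) : ‖(A ^ t) x‖ = ‖x‖ := by
  induction t with
  | zero => rfl
  | succ t ih => rw [pow_succ', mul_apply_eq_comp, hA, ih]

theorem inner_pow_add_apply_of_norm_map {A : H →L[ℝ] H} (hA : ∀ x, ‖A x‖ = ‖x‖)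
    (a b t : ℕ) (u v : H) :
    ⟪(A ^ (a + t)) u, (A ^ (b + t)) v⟫ = ⟪(A ^ a) u, (A ^ b) v⟫ := by
  rw [add_comm a, add_comm b, pow_add, pow_add, mul_apply_eq_comp, mul_apply_eq_comp,
    (LinearMap.norm_map_iff_inner_map_map _).1 (norm_pow_apply_of_norm_map hA t)]

theorem inner_pow_sub_apply_of_norm_map {A : H →L[ℝ] H} (hA : ∀ x, ‖A x‖ = ‖x‖)
    {r s k N : ℕ} (hk : r ≤ k ∧ s ≤ k) (hN : r ≤ N ∧ s ≤ N) (u v : H) :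
    ⟪(A ^ (k - r)) u, (A ^ (k - s)) v⟫ = ⟪(A ^ (N - r)) u, (A ^ (N - s)) v⟫ := by
  rcases le_total k N with hkN | hNk
  · rw [← inner_pow_add_apply_of_norm_map hA (k - r) (k - s) (N - k)]
    congr 3 <;> omega
  · rw [← inner_pow_add_apply_of_norm_map hA (N - r) (N - s) (k - N)]
    congr 3 <;> omega

theorem isMIsometryR_add_of_norm_map_of_commute_of_pow_eq_zero {A Q : H →L[ℝ] H} {j : ℕ}
    (hj : 0 < j) (hA : ∀ x, ‖A x‖ = ‖x‖) (hAQ : Commute A Q) (hQ : Q ^ j = 0) :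
    IsMIsometryR (2 * j - 1) (A + Q) := by
  refine isMIsometryR_of_norm_sq_eq_eval fun x => ?_
  -- `c r s` is the common value of `⟪A^(k-r) Q^r x, A^(k-s) Q^s x⟫` for `k ≥ r, s`
  let c (r s : ℕ) : ℝ := ⟪(A ^ (j - r)) ((Q ^ r) x), (A ^ (j - s)) ((Q ^ s) x)⟫
  refine ⟨∑ r ∈ range j, ∑ s ∈ range j, C (c r s) * (choosePoly r * choosePoly s), ?_,
    fun k => ?_⟩
  · refine lt_of_le_of_lt (b := 2 * (j - 1)) ?_ (by omega)
    refine natDegree_sum_le_of_forall_le _ _ fun r hr =>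
      natDegree_sum_le_of_forall_le _ _ fun s hs => ?_
    refine (natDegree_C_mul_le _ _).trans <| natDegree_mul_le.trans ?_
    have := natDegree_choosePoly_le r
    have := natDegree_choosePoly_le s
    simp only [mem_range] at hr hs
    omega
  · have hexpand :
        ((A + Q) ^ k) x = ∑ r ∈ range j, (k.choose r : ℝ) • (A ^ (k - r)) ((Q ^ r) x) := by
      rw [hAQ.add_pow_eq_sum_range_of_pow_eq_zero hQ, _root_.sum_apply]
      refine sum_congr rfl fun r _ => ?_
      rw [mul_apply_eq_comp, mul_apply_eq_comp, ContinuousLinearMap.natCast_apply,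
        Nat.cast_smul_eq_nsmul]
    rw [hexpand, ← real_inner_self_eq_norm_sq, sum_inner, eval_finsetSum]
    refine sum_congr rfl fun r hr => ?_
    rw [inner_sum, eval_finsetSum]
    refine sum_congr rfl fun s hs => ?_
    rw [real_inner_smul_left, real_inner_smul_right, eval_mul, eval_C, eval_mul,
      choosePoly_eval_natCast, choosePoly_eval_natCast]
    by_cases hk : r ≤ k ∧ s ≤ k
    · simp only [mem_range] at hr hs
      rw [inner_pow_sub_apply_of_norm_map hA hk (N := j) (by omega)]
      ring
    · rcases not_and_or.1 hk with h | h <;> simp [Nat.choose_eq_zero_of_lt (not_le.1 h)]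

end MIsometry

theorem EuclideanSpace.norm_eq_of_forall_abs_apply_eq {ι : Type*} [Fintype ι]
    {x y : EuclideanSpace ℝ ι} (h : ∀ i, |x i| = |y i|) : ‖x‖ = ‖y‖ := by
  simp only [EuclideanSpace.norm_eq, Real.norm_eq_abs, h]

section TruncShift

variable {n j : ℕ} (hj : j ≤ n - 1)
  {Q : EuclideanSpace ℝ (Fin n) →L[ℝ] EuclideanSpace ℝ (Fin n)}

theorem truncShift_pow_apply (hQ : ∀ (x : EuclideanSpace ℝ (Fin n)) (i : Fin n),
      Q x i = if h : 1 ≤ i.val ∧ i.val ≤ j - 1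
        then x ⟨i.val + 1, by have := i.2; omega⟩ else 0)
    {r : ℕ} (hr : 1 ≤ r) (x : EuclideanSpace ℝ (Fin n)) (i : Fin n) :
    (Q ^ r) x i = if h : 1 ≤ i.val ∧ i.val + r ≤ j
      then x ⟨i.val + r, by omega⟩ else 0 := by
  induction r, hr using Nat.le_induction generalizing x with
  | base =>
    rw [pow_one, hQ]
    split_ifs <;> first | rfl | omega
  | succ r hr ih =>
    rw [pow_succ, mul_apply_eq_comp, ih]
    split_ifs with h₁ h₂
    · rw [hQ, dif_pos (by simp only; omega)]
      simp only [add_assoc]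
    · rw [hQ, dif_neg (by simp only; omega)]
    · omega
    · rfl

theorem truncShift_pow_eq_zero (hQ : ∀ (x : EuclideanSpace ℝ (Fin n)) (i : Fin n),
      Q x i = if h : 1 ≤ i.val ∧ i.val ≤ j - 1
        then x ⟨i.val + 1, by have := i.2; omega⟩ else 0)
    (hj1 : 1 ≤ j) : Q ^ j = 0 := by
  ext x i
  rw [truncShift_pow_apply hj hQ hj1, dif_neg (by omega)]
  rfl

theorem truncShift_pow_pred_ne_zero (hQ : ∀ (x : EuclideanSpace ℝ (Fin n)) (i : Fin n),
      Q x i = if h : 1 ≤ i.val ∧ i.val ≤ j - 1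
        then x ⟨i.val + 1, by have := i.2; omega⟩ else 0)
    (hj1 : 1 ≤ j) : Q ^ (j - 1) ≠ 0 := by
  intro h
  rcases hj1.eq_or_lt with rfl | hj1
  · have := congr($h (EuclideanSpace.single ⟨0, by omega⟩ 1) ⟨0, by omega⟩)
    simp at this
  · have := congr($h (EuclideanSpace.single ⟨j, by omega⟩ 1) ⟨1, by omega⟩)
    rw [truncShift_pow_apply hj hQ (by omega),
      dif_pos (show 1 ≤ 1 ∧ 1 + (j - 1) ≤ j by omega)] at this
    simp only [PiLp.single_apply, Fin.mk.injEq, zero_apply, PiLp.zero_apply,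
      ite_eq_right_iff, one_ne_zero, imp_false] at this
    omega

theorem commute_reflect_truncShift
    {A : EuclideanSpace ℝ (Fin n) →L[ℝ] EuclideanSpace ℝ (Fin n)}
    (hA : ∀ (x : EuclideanSpace ℝ (Fin n)) (i : Fin n),
      A x i = if i.val = 0 then -(x i) else x i)
    (hQ : ∀ (x : EuclideanSpace ℝ (Fin n)) (i : Fin n),
      Q x i = if h : 1 ≤ i.val ∧ i.val ≤ j - 1
        then x ⟨i.val + 1, by have := i.2; omega⟩ else 0) :
    Commute A Q := by
  ext x i
  simp only [mul_apply_eq_comp, hA, hQ]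
  split_ifs <;> first | rfl | omega | simp | contradiction

end TruncShift

theorem stmt10 (n j : ℕ) (hj1 : 1 ≤ j) (hj2 : j ≤ n - 1)
    (A Q : EuclideanSpace ℝ (Fin n) →L[ℝ] EuclideanSpace ℝ (Fin n))
    (hA : ∀ (x : EuclideanSpace ℝ (Fin n)) (i : Fin n),
      A x i = if i.val = 0 then -(x i) else x i)
    (hQ : ∀ (x : EuclideanSpace ℝ (Fin n)) (i : Fin n),
      Q x i = if h : 1 ≤ i.val ∧ i.val ≤ j - 1
        then x ⟨i.val + 1, by have := i.2; omega⟩ else 0) :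
    (∀ x, ‖A x‖ = ‖x‖) ∧ Q ^ j = 0 ∧ Q ^ (j - 1) ≠ 0 ∧ A * Q = Q * A ∧
      IsMIsometryR (2 * j - 1) (A + Q) := by
  have hA_norm : ∀ x, ‖A x‖ = ‖x‖ := fun x =>
    EuclideanSpace.norm_eq_of_forall_abs_apply_eq fun i => by rw [hA]; split_ifs <;> simp
  have hQj : Q ^ j = 0 := truncShift_pow_eq_zero hj2 hQ hj1
  have hAQ : Commute A Q := commute_reflect_truncShift hj2 hA hQ
  exact ⟨hA_norm, hQj, truncShift_pow_pred_ne_zero hj2 hQ hj1, hAQ.eq,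
    isMIsometryR_add_of_norm_map_of_commute_of_pow_eq_zero hj1 hA_norm hAQ hQj⟩
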